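/- arXiv:1903.09874 — 7 statements merged into one kernel-verified Lean document; each statement's English description precedes it below -/
import Mathlib

section
/- Let y be a permutation of [n] containing an occurrence y_i y_j y_k y_l y_m of the (classical) pattern 3-5-1-4-2 (positions i<j<k<l<m, values satisfying y_k < y_m < y_i < y_l < y_j). If every entry y_p of y with y_m < y_p < y_l occurs before position j in y, then y contains an occurrence of the vincular pattern 3-51-4-2 (i.e., there exist positions a < b, b+1 < c < d with y_{b+1} < y_d < y_a < y_c < y_b). -/
/-! Since `y j > y l > y k`, the values at positions `j, j + 1, …, k` cross `y l` downwards
somewhere: there is `b ∈ [j, k)` with `y b > y l ≥ y (b + 1)`. As `b + 1` lies after `j`, the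
hypothesis keeps `y (b + 1)` out of `(y m, y l)`, so `y (b + 1) < y m`, and
`y i, y b, y (b + 1), y l, y m` is an occurrence of 3-51-4-2. -/

theorem Nat.exists_succ_not_of_le {P : ℕ → Prop} {j k : ℕ} (hjk : j ≤ k) (hj : P j)
    (hk : ¬ P k) : ∃ b, j ≤ b ∧ b < k ∧ P b ∧ ¬ P (b + 1) := by
  induction k, hjk using Nat.le_induction with
  | base => exact absurd hj hk
  | succ k hjk ih =>
    by_cases hPk : P k
    · exact ⟨k, hjk, k.lt_succ_self, hPk, hk⟩
    · obtain ⟨b, hjb, hbk, hb, hb1⟩ := ih hPk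
      exact ⟨b, hjb, hbk.trans k.lt_succ_self, hb, hb1⟩

theorem Fin.exists_succ_not_of_le {n : ℕ} {P : Fin n → Prop} {j k : Fin n} (hjk : j ≤ k)
    (hj : P j) (hk : ¬ P k) :
    ∃ b b' : Fin n, (b' : ℕ) = b + 1 ∧ j ≤ b ∧ b' ≤ k ∧ P b ∧ ¬ P b' := by
  obtain ⟨b, hjb, hbk, hb, hb1⟩ : ∃ b, (j : ℕ) ≤ b ∧ b < k ∧ (∀ h : b < n, P ⟨b, h⟩) ∧
      ¬ ∀ h : b + 1 < n, P ⟨b + 1, h⟩ :=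
    Nat.exists_succ_not_of_le hjk (fun _ => hj) (fun h => hk (h k.isLt))
  exact ⟨⟨b, hbk.trans k.isLt⟩, ⟨b + 1, Nat.lt_of_le_of_lt hbk k.isLt⟩, rfl, hjb, hbk, hb _,
    fun h => hb1 fun _ => h⟩

/-- If a permutation `y` of `[n]` contains an occurrence of the classical pattern
3-5-1-4-2 such that every value strictly between the '1' and the '4' occurs before
the position of the '5', then `y` contains an occurrence of the vincular pattern
3-51-4-2. -/
theorem stmt_0 (n : ℕ) (y : Equiv.Perm (Fin n))
    (i j k l m : Fin n)
    (hij : i < j) (hjk : j < k) (hkl : k < l) (hlm : l < m)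
    (h1 : y k < y m) (h2 : y m < y i) (h3 : y i < y l) (h4 : y l < y j)
    (hbetween : ∀ p : Fin n, y m < y p → y p < y l → p < j) :
    ∃ a b b' c d : Fin n, a < b ∧ (b' : ℕ) = (b : ℕ) + 1 ∧ b' < c ∧ c < d ∧
      y b' < y d ∧ y d < y a ∧ y a < y c ∧ y c < y b := by
  obtain ⟨b, b', hsucc, hjb, hb'k, hlb, hb'l⟩ := Fin.exists_succ_not_of_le
    (P := fun q => y l < y q) hjk.le h4 (h1.trans (h2.trans h3)).not_gt
  have hbb' : b < b' := Fin.lt_def.2 (by omega)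
  have hb'_lt_l : y b' < y l :=
    (not_lt.1 hb'l).lt_of_ne (y.injective.ne (hb'k.trans_lt hkl).ne)
  have hb'_le_m : y b' ≤ y m :=
    not_lt.1 fun h => (hbetween b' h hb'_lt_l).not_ge (hjb.trans hbb'.le)
  have hb'_lt_m : y b' < y m :=
    hb'_le_m.lt_of_ne (y.injective.ne (hb'k.trans_lt (hkl.trans hlm)).ne)
  exact ⟨i, b, b', l, m, hij.trans_le hjb, hsucc, hb'k.trans_lt hkl, hlm, hb'_lt_m, h2, h3, hlb⟩
end

section
/- A permutation y of [n] avoids both vincular patterns 2-31 and 31-2 if and only if every descent y_i > y_{i+1} of y satisfies y_i - y_{i+1} = 1. -/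
/-!
An occurrence of 2-31 or 31-2 is exactly a descent `y i > y (i+1)` together with a position `c`
whose value lies strictly between the two descent values: such a `c` is neither `i` nor `i+1`, so
it lies to the left of the descent (giving 2-31) or to the right of it (giving 31-2). For a
permutation of `Fin n` the values strictly between `y (i+1)` and `y i` are all attained, so such
a `c` exists exactly when the descent has size at least two.
-/

section Vincular

variable {α : Type*} [LinearOrder α] {n : ℕ}

def HasVincular2_31 (y : Fin n → α) : Prop :=
  ∃ a b b' : Fin n, a < b ∧ (b' : ℕ) = (b : ℕ) + 1 ∧ y b' < y a ∧ y a < y b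

def HasVincular31_2 (y : Fin n → α) : Prop :=
  ∃ a a' c : Fin n, (a' : ℕ) = (a : ℕ) + 1 ∧ a' < c ∧ y a' < y c ∧ y c < y a

lemma lt_or_lt_of_apply_lt_of_lt_apply {y : Fin n → α} {i i' c : Fin n}
    (hi : (i' : ℕ) = (i : ℕ) + 1) (hc' : y i' < y c) (hc : y c < y i) : c < i ∨ i' < c := by
  have hci : c ≠ i := by rintro rfl; exact lt_irrefl _ hc
  have hci' : c ≠ i' := by rintro rfl; exact lt_irrefl _ hc'
  rw [Fin.lt_def, Fin.lt_def]
  rw [Ne, Fin.ext_iff] at hci hci'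
  omega

lemma hasVincular2_31_or_hasVincular31_2_iff (y : Fin n → α) :
    HasVincular2_31 y ∨ HasVincular31_2 y ↔
      ∃ i i' c : Fin n, (i' : ℕ) = (i : ℕ) + 1 ∧ y i' < y c ∧ y c < y i := by
  constructor
  · rintro (⟨a, b, b', -, hb, h₁, h₂⟩ | ⟨a, a', c, ha, -, h₁, h₂⟩)
    · exact ⟨b, b', a, hb, h₁, h₂⟩
    · exact ⟨a, a', c, ha, h₁, h₂⟩
  · rintro ⟨i, i', c, hi, h₁, h₂⟩
    rcases lt_or_lt_of_apply_lt_of_lt_apply hi h₁ h₂ with hci | hic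
    · exact Or.inl ⟨c, i, i', hci, hi, h₁, h₂⟩
    · exact Or.inr ⟨i, i', c, hi, hic, h₁, h₂⟩

end Vincular

lemma Equiv.Perm.exists_lt_apply_lt_iff {n : ℕ} (y : Equiv.Perm (Fin n)) (j k : Fin n) :
    (∃ c, y j < y c ∧ y c < y k) ↔ (y j : ℕ) + 1 < y k := by
  constructor
  · rintro ⟨c, h₁, h₂⟩
    rw [Fin.lt_def] at h₁ h₂
    omega
  · intro h
    refine ⟨y.symm ⟨(y j : ℕ) + 1, h.trans (y k).isLt⟩, ?_, ?_⟩ <;>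
      simp [Fin.lt_def, h]

/-- A permutation avoids both vincular patterns 2-31 and 31-2 if and only if every
descent `yᵢ > yᵢ₊₁` satisfies `yᵢ = yᵢ₊₁ + 1`. -/
theorem stmt_6 (n : ℕ) (y : Equiv.Perm (Fin n)) :
    ((¬∃ a b b' : Fin n, a < b ∧ (b' : ℕ) = (b : ℕ) + 1 ∧ y b' < y a ∧ y a < y b) ∧
     (¬∃ a a' c : Fin n, (a' : ℕ) = (a : ℕ) + 1 ∧ a' < c ∧ y a' < y c ∧ y c < y a)) ↔
    (∀ i i' : Fin n, (i' : ℕ) = (i : ℕ) + 1 → y i' < y i →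
      (y i : ℕ) = (y i' : ℕ) + 1) := by
  change ¬HasVincular2_31 y ∧ ¬HasVincular31_2 y ↔ _
  rw [← not_or, hasVincular2_31_or_hasVincular31_2_iff]
  constructor
  · intro h i i' hi hdesc
    by_contra hne
    rw [Fin.lt_def] at hdesc
    obtain ⟨c, h₁, h₂⟩ := (y.exists_lt_apply_lt_iff i' i).mpr (by omega)
    exact h ⟨i, i', c, hi, h₁, h₂⟩
  · rintro h ⟨i, i', c, hi, h₁, h₂⟩
    have hgap := (y.exists_lt_apply_lt_iff i' i).mp ⟨c, h₁, h₂⟩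
    have hsucc := h i i' hi (h₁.trans h₂)
    omega
end

section
/- The number of permutations of [n] avoiding both vincular patterns 2-31 and 31-2 equals 2^{n-1} (for n ≥ 1), i.e., these 0-clumped permutations are in bijection with compositions of n. -/
/-!
Avoiding both 2-31 and 31-2 means that every descent `y i > y (i + 1)` drops by exactly one:
if `y i > y (i + 1) + 1`, the value `y (i + 1) + 1` sits either left of `i` (giving a 2-31) or
right of `i + 1` (giving a 31-2). In such a permutation of `{0, …, n + 1}` the maximum `n + 1`
is either last or immediately followed by `n`, and deleting it leaves such a permutation of
`{0, …, n}`; conversely `n + 1` can be put back in exactly these two ways. So the number of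
these permutations doubles from one `n` to the next.
-/

open List

theorem List.getLast?_append_cons_cons_ne {α : Type*} {t d : List α} {a b : α}
    (h : (t ++ a :: b :: d).Nodup) : (t ++ a :: b :: d).getLast? ≠ some a := by
  intro hlast
  rw [getLast?_append_of_ne_nil _ (cons_ne_nil _ _), getLast?_cons_cons] at hlast
  have hmem : a ∈ b :: d := mem_of_mem_getLast? hlast
  simp_all [nodup_append]

-- One-line notation of a layered permutation of `{0, …, n - 1}`, with values in `ℕ` so that the
-- recursion on `n` stays inside one type.
def IsLayered (n : ℕ) (l : List ℕ) : Prop :=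
  l ~ range n ∧ l.IsChain (· ≤ · + 1)

abbrev LayeredList (n : ℕ) := {l : List ℕ // IsLayered n l}

theorem isLayered_append_max_iff {n : ℕ} {t : List ℕ} :
    IsLayered (n + 2) (t ++ [n + 1]) ↔ IsLayered (n + 1) t := by
  rw [IsLayered, IsLayered, range_succ (n := n + 1), perm_append_right_iff, isChain_append]
  refine ⟨fun ⟨hp, hc, _⟩ => ⟨hp, hc⟩, fun ⟨hp, hc⟩ => ⟨hp, hc, .singleton _, ?_⟩⟩
  intro x hx y hy
  have : x < n + 1 := by simpa using hp.subset (mem_of_mem_getLast? hx)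
  simp only [head?_cons, Option.mem_some_iff] at hy
  omega

theorem isLayered_insert_max_iff {n : ℕ} {t d : List ℕ} :
    IsLayered (n + 2) (t ++ (n + 1) :: n :: d) ↔ IsLayered (n + 1) (t ++ n :: d) := by
  have hperm : t ++ (n + 1) :: n :: d ~ range (n + 2) ↔ t ++ n :: d ~ range (n + 1) := by
    rw [perm_middle.congr_left, range_succ (n := n + 1), (perm_append_singleton _ _).congr_right,
      perm_cons]
  rw [IsLayered, IsLayered, hperm, isChain_append, isChain_append, isChain_cons_cons]
  refine and_congr_right fun hp => ?_
  have hlast : ∀ x ∈ t.getLast?, x < n + 1 := fun x hx =>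
    mem_range.1 (hp.subset (mem_append_left _ (mem_of_mem_getLast? hx)))
  constructor
  · rintro ⟨ht, ⟨-, hd⟩, -⟩
    exact ⟨ht, hd, fun x hx y hy => by
      rw [head?_cons, Option.mem_some_iff] at hy; have := hlast x hx; omega⟩
  · rintro ⟨ht, hd, -⟩
    exact ⟨ht, ⟨le_rfl, hd⟩, fun x hx y hy => by
      rw [head?_cons, Option.mem_some_iff] at hy; have := hlast x hx; omega⟩

namespace IsLayered

variable {n : ℕ} {l : List ℕ}

theorem nodup (h : IsLayered n l) : l.Nodup :=
  h.1.nodup_iff.2 nodup_range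

theorem mem_iff (h : IsLayered n l) {x : ℕ} : x ∈ l ↔ x < n :=
  h.1.mem_iff.trans mem_range

theorem exists_eq_append_max (h : IsLayered (n + 2) l) :
    ∃ t, n + 1 ∉ t ∧ (l = t ++ [n + 1] ∨ ∃ d, l = t ++ (n + 1) :: n :: d) := by
  obtain ⟨t, d, rfl⟩ := append_of_mem (h.mem_iff.2 (by omega : n + 1 < n + 2))
  have hnd := nodup_middle.1 h.nodup
  simp only [nodup_cons, mem_append, not_or] at hnd
  refine ⟨t, hnd.1.1, ?_⟩
  rcases d with _ | ⟨x, d⟩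
  · exact Or.inl rfl
  · have hx : n + 1 ≤ x + 1 := (isChain_cons_cons.1 h.2.right_of_append).1
    have hxn : x < n + 2 := h.mem_iff.1 (by simp)
    have hne : x ≠ n + 1 := fun hx => hnd.1.2 (by simp [hx])
    exact Or.inr ⟨d, by rw [show x = n by omega]⟩

theorem erase_max (h : IsLayered (n + 2) l) : IsLayered (n + 1) (l.erase (n + 1)) := by
  obtain ⟨t, ht, rfl | ⟨d, rfl⟩⟩ := h.exists_eq_append_max
  · simpa [erase_append_right _ ht] using isLayered_append_max_iff.1 h
  · simpa [erase_append_right _ ht] using isLayered_insert_max_iff.1 h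

end IsLayered

def eraseMax (n : ℕ) (l : LayeredList (n + 2)) : Bool × LayeredList (n + 1) :=
  (decide (l.1.getLast? = some (n + 1)), ⟨l.1.erase (n + 1), l.2.erase_max⟩)

theorem eraseMax_injective (n : ℕ) : Function.Injective (eraseMax n) := by
  rintro ⟨l₁, h₁⟩ ⟨l₂, h₂⟩ heq
  simp only [eraseMax, Prod.mk.injEq, Subtype.mk.injEq, decide_eq_decide] at heq
  obtain ⟨hlast, herase⟩ := heq
  refine Subtype.ext ?_
  obtain ⟨t₁, ht₁, rfl | ⟨d₁, rfl⟩⟩ := h₁.exists_eq_append_max <;>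
    obtain ⟨t₂, ht₂, rfl | ⟨d₂, rfl⟩⟩ := h₂.exists_eq_append_max
  · simpa [erase_append_right _ ht₁, erase_append_right _ ht₂] using herase
  · exact absurd (hlast.1 getLast?_concat) (getLast?_append_cons_cons_ne h₂.nodup)
  · exact absurd (hlast.2 getLast?_concat) (getLast?_append_cons_cons_ne h₁.nodup)
  · simp only [erase_append_right _ ht₁, erase_append_right _ ht₂, erase_cons_head] at herase
    have hnd := nodup_middle.1 (isLayered_insert_max_iff.1 h₁).nodup
    simp only [nodup_cons, mem_append, not_or] at hnd
    obtain ⟨rfl, -, rfl⟩ := (append_cons_inj_of_notMem hnd.1.1 hnd.1.2).1 herase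
    rfl

theorem eraseMax_surjective (n : ℕ) : Function.Surjective (eraseMax n) := by
  rintro ⟨_ | _, l, h⟩
  · obtain ⟨t, d, rfl⟩ := append_of_mem (h.mem_iff.2 (Nat.lt_succ_self n))
    have ht : n + 1 ∉ t := fun hm => by simpa using h.mem_iff.1 (mem_append_left _ hm)
    have hl := isLayered_insert_max_iff.2 h
    refine ⟨⟨_, hl⟩, ?_⟩
    simp only [eraseMax, decide_eq_false (getLast?_append_cons_cons_ne hl.nodup)]
    simp [erase_append_right _ ht]
  · have ht : n + 1 ∉ l := fun hm => by simpa using h.mem_iff.1 hm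
    refine ⟨⟨l ++ [n + 1], isLayered_append_max_iff.2 h⟩, ?_⟩
    simp [eraseMax, erase_append_right _ ht]

theorem card_layeredList_add_two (n : ℕ) :
    Nat.card (LayeredList (n + 2)) = 2 * Nat.card (LayeredList (n + 1)) := by
  rw [Nat.card_eq_of_bijective _ ⟨eraseMax_injective n, eraseMax_surjective n⟩, Nat.card_prod,
    Nat.card_eq_fintype_card (α := Bool), Fintype.card_bool]

theorem card_layeredList_of_le_one {n : ℕ} (hn : n ≤ 1) : Nat.card (LayeredList n) = 1 := by
  refine Nat.card_eq_one_iff_exists.2 ⟨⟨range n, .refl _, ?_⟩, fun ⟨l, hl⟩ => Subtype.ext ?_⟩ <;>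
    interval_cases n
  exacts [.nil, .singleton 0, by simpa using hl.1, by simpa using hl.1]

theorem card_layeredList : ∀ n, Nat.card (LayeredList n) = 2 ^ (n - 1)
  | 0 | 1 => card_layeredList_of_le_one (by norm_num)
  | n + 2 => by rw [card_layeredList_add_two, card_layeredList (n + 1)]; simp [pow_succ']

section OneLine

variable {n : ℕ}

def oneLine (y : Equiv.Perm (Fin n)) : List ℕ :=
  ofFn fun i => (y i : ℕ)

theorem oneLine_perm_range (y : Equiv.Perm (Fin n)) : oneLine y ~ range n :=
  (y.ofFn_comp_perm Fin.val).trans (by simp [ofFn_eq_map])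

theorem oneLine_injective : Function.Injective (oneLine (n := n)) :=
  fun _ _ h => Equiv.ext fun i => Fin.ext (congrFun (ofFn_injective h) i)

theorem exists_oneLine_eq {l : List ℕ} (hl : l ~ range n) :
    ∃ y : Equiv.Perm (Fin n), oneLine y = l := by
  have hlen : l.length = n := by simpa using hl.length_eq
  have hnd : l.Nodup := hl.nodup_iff.2 nodup_range
  let f : Fin n → Fin n := fun i => ⟨l[i], by simpa using hl.subset (getElem_mem _)⟩
  have hf : Function.Injective f := fun i j hij =>
    Fin.ext (hnd.getElem_inj_iff.1 (Fin.val_eq_of_eq hij))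
  refine ⟨Equiv.ofBijective f (Finite.injective_iff_bijective.1 hf),
    ext_getElem (by simp [oneLine, hlen]) fun k _ _ => ?_⟩
  simp [oneLine, f]

theorem isChain_oneLine_iff (y : Equiv.Perm (Fin n)) :
    (oneLine y).IsChain (· ≤ · + 1) ↔ ∀ i j : Fin n, (j : ℕ) = i + 1 → (y i : ℕ) ≤ y j + 1 := by
  rw [oneLine, isChain_ofFn]
  constructor
  · rintro h ⟨i, -⟩ ⟨_, hj⟩ rfl
    exact h i hj
  · exact fun h i _ => h _ _ rfl

theorem card_isLayered_oneLine :
    Nat.card {y : Equiv.Perm (Fin n) // IsLayered n (oneLine y)} = Nat.card (LayeredList n) := by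
  refine Nat.card_eq_of_bijective (fun y => ⟨oneLine y.1, y.2⟩) ⟨fun y z h => ?_, fun l => ?_⟩
  · exact Subtype.ext (oneLine_injective (congrArg Subtype.val h))
  · obtain ⟨y, hy⟩ := exists_oneLine_eq l.2.1
    exact ⟨⟨y, hy ▸ l.2⟩, Subtype.ext hy⟩

theorem avoids_iff_forall_le_succ (y : Equiv.Perm (Fin n)) :
    ((¬∃ a b b' : Fin n, a < b ∧ (b' : ℕ) = (b : ℕ) + 1 ∧ y b' < y a ∧ y a < y b) ∧
      (¬∃ a a' c : Fin n, (a' : ℕ) = (a : ℕ) + 1 ∧ a' < c ∧ y a' < y c ∧ y c < y a)) ↔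
    ∀ i j : Fin n, (j : ℕ) = i + 1 → (y i : ℕ) ≤ y j + 1 := by
  simp only [Fin.lt_def]
  constructor
  · rintro ⟨h231, h312⟩ i j hij
    by_contra! hgap
    obtain ⟨m, hm⟩ : ∃ m : Fin n, (y m : ℕ) = y j + 1 :=
      ⟨y.symm ⟨y j + 1, by have := (y i).isLt; omega⟩, by simp⟩
    have hmi : (m : ℕ) ≠ i := fun h => by rw [Fin.ext h] at hm; omega
    have hmj : (m : ℕ) ≠ j := fun h => by rw [Fin.ext h] at hm; omega
    rcases Nat.lt_or_gt_of_ne hmi with hlt | hgt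
    · exact h231 ⟨m, i, j, hlt, hij, by omega, by omega⟩
    · exact h312 ⟨i, j, m, hij, by omega, by omega, by omega⟩
  · intro h
    refine ⟨fun ⟨a, b, b', _, hb, h₁, h₂⟩ => ?_, fun ⟨a, a', c, ha, _, h₁, h₂⟩ => ?_⟩
    · have := h b b' hb; omega
    · have := h a a' ha; omega

theorem avoids_iff_isLayered_oneLine (y : Equiv.Perm (Fin n)) :
    ((¬∃ a b b' : Fin n, a < b ∧ (b' : ℕ) = (b : ℕ) + 1 ∧ y b' < y a ∧ y a < y b) ∧
      (¬∃ a a' c : Fin n, (a' : ℕ) = (a : ℕ) + 1 ∧ a' < c ∧ y a' < y c ∧ y c < y a)) ↔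
    IsLayered n (oneLine y) := by
  rw [avoids_iff_forall_le_succ, IsLayered, isChain_oneLine_iff,
    and_iff_right (oneLine_perm_range y)]

end OneLine

theorem stmt_7_general (n : ℕ) :
    Nat.card {y : Equiv.Perm (Fin n) //
      (¬∃ a b b' : Fin n, a < b ∧ (b' : ℕ) = (b : ℕ) + 1 ∧ y b' < y a ∧ y a < y b) ∧
      (¬∃ a a' c : Fin n, (a' : ℕ) = (a : ℕ) + 1 ∧ a' < c ∧ y a' < y c ∧ y c < y a)} =
    2 ^ (n - 1) := by
  rw [Nat.card_congr (Equiv.subtypeEquivRight avoids_iff_isLayered_oneLine),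
    card_isLayered_oneLine, card_layeredList]

/-- The number of permutations of `[n]` (for `n ≥ 1`) avoiding both vincular patterns
2-31 and 31-2 equals `2 ^ (n - 1)`, the number of compositions of `n`. -/
theorem stmt_7 (n : ℕ) (hn : 1 ≤ n) :
    Nat.card {y : Equiv.Perm (Fin n) //
      (¬∃ a b b' : Fin n, a < b ∧ (b' : ℕ) = (b : ℕ) + 1 ∧ y b' < y a ∧ y a < y b) ∧
      (¬∃ a a' c : Fin n, (a' : ℕ) = (a : ℕ) + 1 ∧ a' < c ∧ y a' < y c ∧ y c < y a)} =
    2 ^ (n - 1) :=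
  stmt_7_general n
end

section
/- Let x ∈ S_p and y ∈ S_q with n = p + q. Define xy' ∈ S_n as the concatenation of x with the sequence (y_1 + p)...(y_q + p), and y'x ∈ S_n as the concatenation of (y_1 + p)...(y_q + p) with x. Then xy' ≤ y'x in the right weak order on S_n, and a permutation z ∈ S_n lies in the interval [xy', y'x] if and only if z is a shuffle of the sequences x_1...x_p and (y_1+p)...(y_q+p) (i.e., the restriction of z to values in [p] equals x and the restriction of z to values in [p+1, n], shifted down by p, equals y). -/
/-!
Values of `[p+q]` split into the block `[p]` and the block `[p+1, p+q]`, so an inversion is either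
a pair inside one block or a mixed pair. Both `xy'` and `y'x` restrict to `x` and `y` on the
blocks; `xy'` has no mixed inversion and `y'x` has all of them. Hence the inversion sets between
the two are exactly those whose restrictions to the blocks are the inversion sets of `x` and `y`,
and a permutation is determined on a block by the inversions there.
-/

/-- The inversion set of a permutation: pairs of values `(a, b)` with `a < b` such that
`b` precedes `a` in the one-line notation. -/
def invSet {n : ℕ} (x : Equiv.Perm (Fin n)) : Set (Fin n × Fin n) :=
  {p | p.1 < p.2 ∧ x.symm p.2 < x.symm p.1}

/-- The concatenation `xy'` of `x ∈ S_p` with the shifted permutation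
`y' = (y₁+p)⋯(y_q+p)`: positions `0,…,p-1` hold `x`, positions `p,…,p+q-1`
hold the entries of `y` shifted up by `p`. -/
def hconcat {p q : ℕ} (x : Equiv.Perm (Fin p)) (y : Equiv.Perm (Fin q)) :
    Equiv.Perm (Fin (p + q)) :=
  finSumFinEquiv.symm.trans ((x.sumCongr y).trans finSumFinEquiv)

/-- The concatenation `y'x`: positions `0,…,q-1` hold the entries of `y` shifted up
by `p`, positions `q,…,q+p-1` hold `x`. -/
def vconcat {p q : ℕ} (x : Equiv.Perm (Fin p)) (y : Equiv.Perm (Fin q)) :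
    Equiv.Perm (Fin (p + q)) :=
  ((finCongr (Nat.add_comm p q)).trans finSumFinEquiv.symm).trans
    (((y.sumCongr x).trans (Equiv.sumComm (Fin q) (Fin p))).trans finSumFinEquiv)

open Equiv

/-- `Prod.map e e ⁻¹' invSet z` is the inversion set of the restriction of `z` to the values in
`Set.range e`, read back in `Fin m`. -/
theorem preimage_invSet_eq_iff {m n : ℕ} (e : Fin m ↪o Fin n) (z : Perm (Fin n)) (w : Perm (Fin m)) :
    Prod.map e e ⁻¹' invSet z = invSet w ↔
      ∀ a b, z.symm (e a) < z.symm (e b) ↔ w.symm a < w.symm b := by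
  constructor
  · intro h a b
    have hinv : ∀ {a b}, a < b → (z.symm (e b) < z.symm (e a) ↔ w.symm b < w.symm a) :=
      fun {a b} hab => by simpa [invSet, hab] using Set.ext_iff.1 h (a, b)
    rcases lt_trichotomy a b with hab | rfl | hab
    · have hz : z.symm (e a) ≠ z.symm (e b) := by simpa using hab.ne
      have hw : w.symm a ≠ w.symm b := by simpa using hab.ne
      rw [← hz.le_iff_lt, ← not_lt, hinv hab, not_lt, hw.le_iff_lt]
    · simp
    · exact hinv hab
  · intro h
    ext ⟨a, b⟩
    simp [invSet, h]

section Concat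

variable {p q : ℕ} (x : Perm (Fin p)) (y : Perm (Fin q))

@[simp]
theorem hconcat_symm_castAdd (a : Fin p) :
    (hconcat x y).symm (Fin.castAdd q a) = Fin.castAdd q (x.symm a) := by
  simp [hconcat]

@[simp]
theorem hconcat_symm_natAdd (b : Fin q) :
    (hconcat x y).symm (Fin.natAdd p b) = Fin.natAdd p (y.symm b) := by
  simp [hconcat]

@[simp]
theorem vconcat_symm_castAdd (a : Fin p) :
    (vconcat x y).symm (Fin.castAdd q a) = (x.symm a).addNat q := by
  simp [vconcat]

theorem val_vconcat_symm_natAdd (b : Fin q) :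
    ((vconcat x y).symm (Fin.natAdd p b) : ℕ) = y.symm b := by
  simp [vconcat]

theorem preimage_castAdd_invSet_hconcat :
    Prod.map (Fin.castAddOrderEmb q) (Fin.castAddOrderEmb q) ⁻¹' invSet (hconcat x y) =
      invSet x := by
  simp [preimage_invSet_eq_iff, (Fin.strictMono_castAdd q).lt_iff_lt]

theorem preimage_natAdd_invSet_hconcat :
    Prod.map (Fin.natAddOrderEmb p) (Fin.natAddOrderEmb p) ⁻¹' invSet (hconcat x y) =
      invSet y := by
  simp [preimage_invSet_eq_iff]

theorem preimage_castAdd_invSet_vconcat :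
    Prod.map (Fin.castAddOrderEmb q) (Fin.castAddOrderEmb q) ⁻¹' invSet (vconcat x y) =
      invSet x := by
  simp [preimage_invSet_eq_iff]

theorem preimage_natAdd_invSet_vconcat :
    Prod.map (Fin.natAddOrderEmb p) (Fin.natAddOrderEmb p) ⁻¹' invSet (vconcat x y) =
      invSet y := by
  simp only [preimage_invSet_eq_iff, Fin.natAddOrderEmb_apply, Fin.lt_def,
    val_vconcat_symm_natAdd, implies_true]

theorem castAdd_lt_natAdd (a : Fin p) (b : Fin q) : Fin.castAdd q a < Fin.natAdd p b := by
  simp only [Fin.lt_def, Fin.val_castAdd, Fin.val_natAdd]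
  omega

theorem notMem_invSet_hconcat_castAdd_natAdd (a : Fin p) (b : Fin q) :
    (Fin.castAdd q a, Fin.natAdd p b) ∉ invSet (hconcat x y) := by
  simp only [invSet, Set.mem_ofPred_eq, Fin.lt_def, hconcat_symm_castAdd, hconcat_symm_natAdd,
    Fin.val_castAdd, Fin.val_natAdd]
  omega

theorem mem_invSet_vconcat_castAdd_natAdd (a : Fin p) (b : Fin q) :
    (Fin.castAdd q a, Fin.natAdd p b) ∈ invSet (vconcat x y) := by
  simp only [invSet, Set.mem_ofPred_eq, Fin.lt_def, vconcat_symm_castAdd, val_vconcat_symm_natAdd,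
    Fin.val_addNat, Fin.val_castAdd, Fin.val_natAdd]
  omega

theorem invSet_subset_of_blocks {s t : Perm (Fin (p + q))}
    (hl : Prod.map (Fin.castAddOrderEmb q) (Fin.castAddOrderEmb q) ⁻¹' invSet s ⊆
      Prod.map (Fin.castAddOrderEmb q) (Fin.castAddOrderEmb q) ⁻¹' invSet t)
    (hr : Prod.map (Fin.natAddOrderEmb p) (Fin.natAddOrderEmb p) ⁻¹' invSet s ⊆
      Prod.map (Fin.natAddOrderEmb p) (Fin.natAddOrderEmb p) ⁻¹' invSet t)
    (hc : ∀ a b, (Fin.castAdd q a, Fin.natAdd p b) ∈ invSet s →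
      (Fin.castAdd q a, Fin.natAdd p b) ∈ invSet t) :
    invSet s ⊆ invSet t := by
  rintro ⟨u, v⟩ huv
  induction u using Fin.addCases with
  | left a =>
    induction v using Fin.addCases with
    | left b => exact hl (a := (a, b)) huv
    | right b => exact hc a b huv
  | right a =>
    induction v using Fin.addCases with
    | left b => exact absurd huv.1 (castAdd_lt_natAdd b a).asymm
    | right b => exact hr (a := (a, b)) huv

theorem invSet_between_hconcat_vconcat_iff (z : Perm (Fin (p + q))) :
    (invSet (hconcat x y) ⊆ invSet z ∧ invSet z ⊆ invSet (vconcat x y)) ↔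
      (Prod.map (Fin.castAddOrderEmb q) (Fin.castAddOrderEmb q) ⁻¹' invSet z = invSet x ∧
        Prod.map (Fin.natAddOrderEmb p) (Fin.natAddOrderEmb p) ⁻¹' invSet z = invSet y) := by
  constructor
  · rintro ⟨hhz, hzv⟩
    constructor
    · refine Set.Subset.antisymm ?_ ?_
      · rw [← preimage_castAdd_invSet_vconcat x y]; exact Set.preimage_mono hzv
      · rw [← preimage_castAdd_invSet_hconcat x y]; exact Set.preimage_mono hhz
    · refine Set.Subset.antisymm ?_ ?_
      · rw [← preimage_natAdd_invSet_vconcat x y]; exact Set.preimage_mono hzv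
      · rw [← preimage_natAdd_invSet_hconcat x y]; exact Set.preimage_mono hhz
  · rintro ⟨hl, hr⟩
    constructor
    · refine invSet_subset_of_blocks ?_ ?_ fun a b h => ?_
      · rw [preimage_castAdd_invSet_hconcat, hl]
      · rw [preimage_natAdd_invSet_hconcat, hr]
      · exact absurd h (notMem_invSet_hconcat_castAdd_natAdd x y a b)
    · refine invSet_subset_of_blocks ?_ ?_ fun a b _ => mem_invSet_vconcat_castAdd_natAdd x y a b
      · rw [hl, preimage_castAdd_invSet_vconcat]
      · rw [hr, preimage_natAdd_invSet_vconcat]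

end Concat

/-- `xy' ≤ y'x` in the right weak order on `S_{p+q}`, and `z ∈ [xy', y'x]` iff `z` is a
shuffle of `x` and the shifted `y`: the restriction of `z` to values in `[p]` is `x` and
the restriction of `z` to values in `[p+1, p+q]`, shifted down by `p`, is `y` (expressed
via relative order of positions of the corresponding values). -/
theorem stmt_13 (p q : ℕ) (x : Equiv.Perm (Fin p)) (y : Equiv.Perm (Fin q)) :
    invSet (hconcat x y) ⊆ invSet (vconcat x y) ∧
    ∀ z : Equiv.Perm (Fin (p + q)),
      (invSet (hconcat x y) ⊆ invSet z ∧ invSet z ⊆ invSet (vconcat x y)) ↔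
      ((∀ a b : Fin p, z.symm (Fin.castAdd q a) < z.symm (Fin.castAdd q b) ↔
          x.symm a < x.symm b) ∧
       (∀ a b : Fin q, z.symm (Fin.natAdd p a) < z.symm (Fin.natAdd p b) ↔
          y.symm a < y.symm b)) := by
  have hvconcat := (invSet_between_hconcat_vconcat_iff x y (vconcat x y)).2
    ⟨preimage_castAdd_invSet_vconcat x y, preimage_natAdd_invSet_vconcat x y⟩
  refine ⟨hvconcat.1, fun z => ?_⟩
  rw [invSet_between_hconcat_vconcat_iff, preimage_invSet_eq_iff, preimage_invSet_eq_iff]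
  simp only [Fin.castAddOrderEmb_apply, Fin.natAddOrderEmb_apply]
end

section
/- If x ∈ S_p avoids all four vincular patterns 2-4-51-3, 4-2-51-3, 3-51-2-4, 3-51-4-2, and y ∈ S_q also avoids these patterns, then the concatenation y'x ∈ S_{p+q} (where y' = (y_1+p)...(y_q+p)) also avoids all four patterns. -/
/-!
In `y'x` the first `q` positions carry the values `≥ p` and the last `p` positions the values
`< p`, so `y'x` is the skew sum of `y` and `x`. An occurrence of a pattern meeting both blocks
would therefore cut the pattern into a nonempty prefix all of whose values exceed those of the
nonempty suffix, i.e. write it as a skew sum. The four patterns 24513, 42513, 35124, 35142 are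
skew-indecomposable, so every occurrence lies inside one block; the blocks are intervals of
positions on which `y'x` is order-isomorphic to `y` resp. `x`, so adjacency constraints survive
and the occurrence is one in `y` or in `x`.
-/

/-- `z` avoids the four vincular patterns 2-4-51-3, 4-2-51-3, 3-51-2-4 and 3-51-4-2
(the entries playing the roles of 5 and 1 must be adjacent); such permutations are
the 2-clumped permutations. -/
def Avoids2Clumped {n : ℕ} (z : Equiv.Perm (Fin n)) : Prop :=
  (¬∃ i1 i2 i3 i3' i5 : Fin n, i1 < i2 ∧ i2 < i3 ∧ (i3' : ℕ) = (i3 : ℕ) + 1 ∧ i3' < i5 ∧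
      z i3' < z i1 ∧ z i1 < z i5 ∧ z i5 < z i2 ∧ z i2 < z i3) ∧
  (¬∃ i1 i2 i3 i3' i5 : Fin n, i1 < i2 ∧ i2 < i3 ∧ (i3' : ℕ) = (i3 : ℕ) + 1 ∧ i3' < i5 ∧
      z i3' < z i2 ∧ z i2 < z i5 ∧ z i5 < z i1 ∧ z i1 < z i3) ∧
  (¬∃ i1 i2 i2' i4 i5 : Fin n, i1 < i2 ∧ (i2' : ℕ) = (i2 : ℕ) + 1 ∧ i2' < i4 ∧ i4 < i5 ∧
      z i2' < z i4 ∧ z i4 < z i1 ∧ z i1 < z i5 ∧ z i5 < z i2) ∧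
  (¬∃ i1 i2 i2' i4 i5 : Fin n, i1 < i2 ∧ (i2' : ℕ) = (i2 : ℕ) + 1 ∧ i2' < i4 ∧ i4 < i5 ∧
      z i2' < z i5 ∧ z i5 < z i1 ∧ z i1 < z i4 ∧ z i4 < z i2)

section Vincular

variable {n m : ℕ} {α : Type*} [LT α]

/-- `i` lists the positions of the occurrence in increasing order, the entry at position `i a`
has rank `π a` among the entries of the occurrence, and positions `a ∈ A` and `a + 1` of the
pattern must be adjacent in `z`. -/
structure IsVincularOccurrence (z : Fin n → α) (π : Fin m → Fin m) (A : Set (Fin m))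
    (i : Fin m → Fin n) : Prop where
  strictMono : StrictMono i
  adjacent : ∀ a b : Fin m, a ∈ A → (b : ℕ) = a + 1 → (i b : ℕ) = i a + 1
  lt_of_lt : ∀ a b, π a < π b → z (i a) < z (i b)

def ContainsVincular (z : Fin n → α) (π : Fin m → Fin m) (A : Set (Fin m)) : Prop :=
  ∃ i, IsVincularOccurrence z π A i

def SkewIndecomposable (π : Fin m → Fin m) : Prop :=
  ∀ k : Fin m, 0 < (k : ℕ) → ∃ a b : Fin m, a < k ∧ k ≤ b ∧ π a < π b

end Vincular

section Vconcat

variable {m p q : ℕ} (x : Equiv.Perm (Fin p)) (y : Equiv.Perm (Fin q))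

theorem vconcat_apply_of_lt (i : Fin (p + q)) (h : (i : ℕ) < q) :
    (vconcat x y i : ℕ) = p + y ⟨i, h⟩ := by
  have : finCongr (Nat.add_comm p q) i = Fin.castAdd p ⟨i, h⟩ := by ext; simp
  simp only [vconcat, Equiv.trans_apply]
  rw [this, finSumFinEquiv_symm_apply_castAdd]
  simp

theorem vconcat_apply_of_le (i : Fin (p + q)) (h : q ≤ (i : ℕ)) :
    (vconcat x y i : ℕ) = x ⟨i - q, by omega⟩ := by
  have : finCongr (Nat.add_comm p q) i = Fin.natAdd q ⟨i - q, by omega⟩ := by ext; simp; omega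
  simp only [vconcat, Equiv.trans_apply]
  rw [this, finSumFinEquiv_symm_apply_natAdd]
  simp

variable {x y}

theorem le_of_vconcat_lt {a b : Fin (p + q)} (hab : vconcat x y a < vconcat x y b)
    (hb : q ≤ (b : ℕ)) : q ≤ (a : ℕ) := by
  by_contra ha
  rw [Fin.lt_def, vconcat_apply_of_lt x y a (by omega), vconcat_apply_of_le x y b hb] at hab
  have := (x ⟨b - q, by omega⟩).isLt
  omega

theorem vconcat_lt_vconcat_iff_of_lt {a b : Fin (p + q)} (ha : (a : ℕ) < q) (hb : (b : ℕ) < q) :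
    vconcat x y a < vconcat x y b ↔ y ⟨a, ha⟩ < y ⟨b, hb⟩ := by
  simp only [Fin.lt_def, vconcat_apply_of_lt x y _ ha, vconcat_apply_of_lt x y _ hb,
    Nat.add_lt_add_iff_left]

theorem vconcat_lt_vconcat_iff_of_le {a b : Fin (p + q)} (ha : q ≤ (a : ℕ)) (hb : q ≤ (b : ℕ)) :
    vconcat x y a < vconcat x y b ↔ x ⟨a - q, by omega⟩ < x ⟨b - q, by omega⟩ := by
  simp only [Fin.lt_def, vconcat_apply_of_le x y _ ha, vconcat_apply_of_le x y _ hb]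

variable {π : Fin m → Fin m} {A : Set (Fin m)} {i : Fin m → Fin (p + q)}

namespace IsVincularOccurrence

theorem vconcat_left (h : IsVincularOccurrence (vconcat x y) π A i) (hi : ∀ a, (i a : ℕ) < q) :
    IsVincularOccurrence y π A fun a => ⟨i a, hi a⟩ where
  strictMono _ _ hab := h.strictMono hab
  adjacent a b ha hb := h.adjacent a b ha hb
  lt_of_lt a b hab := (vconcat_lt_vconcat_iff_of_lt _ _).1 (h.lt_of_lt a b hab)

theorem vconcat_right (h : IsVincularOccurrence (vconcat x y) π A i) (hi : ∀ a, q ≤ (i a : ℕ)) :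
    IsVincularOccurrence x π A
      fun a => ⟨i a - q, Nat.sub_lt_left_of_lt_add (hi a) ((i a).isLt.trans_eq (add_comm p q))⟩
    where
  strictMono a b hab := by
    have := h.strictMono hab
    have := hi a
    simp only [Fin.lt_def] at this ⊢
    omega
  adjacent a b ha hb := by
    have := h.adjacent a b ha hb
    have := hi a
    dsimp only
    omega
  lt_of_lt a b hab := (vconcat_lt_vconcat_iff_of_le (hi a) (hi b)).1 (h.lt_of_lt a b hab)

theorem forall_le_of_vconcat (h : IsVincularOccurrence (vconcat x y) π A i)
    (hπ : SkewIndecomposable π) (hx : ∃ b, q ≤ (i b : ℕ)) : ∀ a, q ≤ (i a : ℕ) := by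
  obtain ⟨b, hb⟩ := hx
  obtain ⟨k, hk, hmin⟩ := wellFounded_lt.has_min {b | q ≤ (i b : ℕ)} ⟨b, hb⟩
  have hk0 : (k : ℕ) = 0 := by
    by_contra hk0
    obtain ⟨a, c, hak, hkc, hac⟩ := hπ k (Nat.pos_of_ne_zero hk0)
    have hc : q ≤ (i c : ℕ) := le_trans hk (h.strictMono.monotone hkc)
    exact hmin a (le_of_vconcat_lt (h.lt_of_lt a c hac) hc) hak
  intro a
  exact le_trans hk (h.strictMono.monotone (Fin.le_def.2 (hk0 ▸ Nat.zero_le _)))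

end IsVincularOccurrence

theorem ContainsVincular.of_vconcat (hπ : SkewIndecomposable π)
    (h : ContainsVincular (vconcat x y) π A) :
    ContainsVincular x π A ∨ ContainsVincular y π A := by
  obtain ⟨i, hi⟩ := h
  by_cases hleft : ∀ a, (i a : ℕ) < q
  · exact .inr ⟨_, hi.vconcat_left hleft⟩
  · push Not at hleft
    exact .inl ⟨_, hi.vconcat_right (hi.forall_le_of_vconcat hπ hleft)⟩

end Vconcat

section Clumped

/-- 2-4-51-3, 4-2-51-3, 3-51-2-4 and 3-51-4-2, in `0`-based one-line notation. -/
def clumpedPatterns : List ((Fin 5 → Fin 5) × Set (Fin 5)) :=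
  [(![1, 3, 4, 0, 2], {2}), (![3, 1, 4, 0, 2], {2}), (![2, 4, 0, 1, 3], {1}),
    (![2, 4, 0, 3, 1], {1})]

theorem skewIndecomposable_of_mem_clumpedPatterns :
    ∀ P ∈ clumpedPatterns, SkewIndecomposable P.1 := by
  simp only [clumpedPatterns, List.forall_mem_cons, List.not_mem_nil, IsEmpty.forall_iff,
    forall_const, and_true, SkewIndecomposable]
  decide

variable {n : ℕ} {z : Equiv.Perm (Fin n)}

theorem Avoids2Clumped.not_containsVincular (hz : Avoids2Clumped z) :
    ∀ P ∈ clumpedPatterns, ¬ContainsVincular z P.1 P.2 := by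
  obtain ⟨h1, h2, h3, h4⟩ := hz
  simp only [clumpedPatterns, List.forall_mem_cons, List.not_mem_nil, IsEmpty.forall_iff,
    forall_const, and_true]
  refine ⟨?_, ?_, ?_, ?_⟩ <;> rintro ⟨i, hmono, hadj, hval⟩
  · exact h1 ⟨i 0, i 1, i 2, i 3, i 4, hmono (by decide), hmono (by decide), hadj 2 3 rfl rfl,
      hmono (by decide), hval 3 0 (by decide), hval 0 4 (by decide), hval 4 1 (by decide),
      hval 1 2 (by decide)⟩
  · exact h2 ⟨i 0, i 1, i 2, i 3, i 4, hmono (by decide), hmono (by decide), hadj 2 3 rfl rfl,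
      hmono (by decide), hval 3 1 (by decide), hval 1 4 (by decide), hval 4 0 (by decide),
      hval 0 2 (by decide)⟩
  · exact h3 ⟨i 0, i 1, i 2, i 3, i 4, hmono (by decide), hadj 1 2 rfl rfl, hmono (by decide),
      hmono (by decide), hval 2 3 (by decide), hval 3 0 (by decide), hval 0 4 (by decide),
      hval 4 1 (by decide)⟩
  · exact h4 ⟨i 0, i 1, i 2, i 3, i 4, hmono (by decide), hadj 1 2 rfl rfl, hmono (by decide),
      hmono (by decide), hval 2 4 (by decide), hval 4 0 (by decide), hval 0 3 (by decide),
      hval 3 1 (by decide)⟩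

theorem avoids2Clumped_of_not_containsVincular
    (hz : ∀ P ∈ clumpedPatterns, ¬ContainsVincular z P.1 P.2) : Avoids2Clumped z := by
  simp only [clumpedPatterns, List.forall_mem_cons, List.not_mem_nil, IsEmpty.forall_iff,
    forall_const, and_true] at hz
  obtain ⟨h1, h2, h3, h4⟩ := hz
  refine ⟨fun ⟨a, b, c, d, e, h⟩ => h1 ⟨![a, b, c, d, e], ?_⟩,
    fun ⟨a, b, c, d, e, h⟩ => h2 ⟨![a, b, c, d, e], ?_⟩,
    fun ⟨a, b, c, d, e, h⟩ => h3 ⟨![a, b, c, d, e], ?_⟩,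
    fun ⟨a, b, c, d, e, h⟩ => h4 ⟨![a, b, c, d, e], ?_⟩⟩
  all_goals
    obtain ⟨hab, hbc, hcd, hde, hv₁, hv₂, hv₃, hv₄⟩ := h
    refine ⟨?_, fun u w hu hw => ?_, fun u w huw => ?_⟩
    · simp only [Nat.reduceAdd, strictMono_vecCons, Fin.isValue,
        Matrix.cons_val_zero, Matrix.cons_val_fin_one, strictMono_vecEmpty, and_true]
      simp only [Fin.lt_def] at hab hbc hcd hde ⊢
      omega
    · simp only [Set.mem_singleton_iff] at hu
      subst hu
      fin_cases w <;> simp at hw ⊢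
      assumption
    · fin_cases u <;> fin_cases w <;> simp at huw ⊢
      all_goals order

end Clumped

/-- If `x` and `y` are 2-clumped (avoid the four vincular patterns), then so is the
concatenation `y'x`. -/
theorem stmt_14 (p q : ℕ) (x : Equiv.Perm (Fin p)) (y : Equiv.Perm (Fin q))
    (hx : Avoids2Clumped x) (hy : Avoids2Clumped y) :
    Avoids2Clumped (vconcat x y) := by
  refine avoids2Clumped_of_not_containsVincular fun P hP hocc => ?_
  rcases hocc.of_vconcat (skewIndecomposable_of_mem_clumpedPatterns P hP) with h | h
  exacts [hx.not_containsVincular P hP h, hy.not_containsVincular P hP h]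
end

section
/- If x ∈ S_p avoids all four vincular patterns 2-4-51-3, 4-2-51-3, 3-51-2-4, 3-51-4-2, and y ∈ S_q also avoids these patterns, then the concatenation xy' ∈ S_{p+q} (where y' = (y_1+p)...(y_q+p)) also avoids all four patterns. -/
open Equiv

def Avoids2ClumpedOn {n : ℕ} (z : Perm (Fin n)) (s : Set (Fin n)) : Prop :=
  (¬∃ i1 i2 i3 i3' i5 : Fin n, i1 ∈ s ∧ i2 ∈ s ∧ i3 ∈ s ∧ i3' ∈ s ∧ i5 ∈ s ∧
      i1 < i2 ∧ i2 < i3 ∧ (i3' : ℕ) = (i3 : ℕ) + 1 ∧ i3' < i5 ∧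
      z i3' < z i1 ∧ z i1 < z i5 ∧ z i5 < z i2 ∧ z i2 < z i3) ∧
  (¬∃ i1 i2 i3 i3' i5 : Fin n, i1 ∈ s ∧ i2 ∈ s ∧ i3 ∈ s ∧ i3' ∈ s ∧ i5 ∈ s ∧
      i1 < i2 ∧ i2 < i3 ∧ (i3' : ℕ) = (i3 : ℕ) + 1 ∧ i3' < i5 ∧
      z i3' < z i2 ∧ z i2 < z i5 ∧ z i5 < z i1 ∧ z i1 < z i3) ∧
  (¬∃ i1 i2 i2' i4 i5 : Fin n, i1 ∈ s ∧ i2 ∈ s ∧ i2' ∈ s ∧ i4 ∈ s ∧ i5 ∈ s ∧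
      i1 < i2 ∧ (i2' : ℕ) = (i2 : ℕ) + 1 ∧ i2' < i4 ∧ i4 < i5 ∧
      z i2' < z i4 ∧ z i4 < z i1 ∧ z i1 < z i5 ∧ z i5 < z i2) ∧
  (¬∃ i1 i2 i2' i4 i5 : Fin n, i1 ∈ s ∧ i2 ∈ s ∧ i2' ∈ s ∧ i4 ∈ s ∧ i5 ∈ s ∧
      i1 < i2 ∧ (i2' : ℕ) = (i2 : ℕ) + 1 ∧ i2' < i4 ∧ i4 < i5 ∧
      z i2' < z i5 ∧ z i5 < z i1 ∧ z i1 < z i4 ∧ z i4 < z i2)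

theorem Avoids2Clumped.avoids2ClumpedOn_range_of_shift {m n c : ℕ} {w : Perm (Fin m)}
    {z : Perm (Fin n)} (hw : Avoids2Clumped w) {e : Fin m → Fin n}
    (he : ∀ a, (e a : ℕ) = a + c) (hz : ∀ a, (z (e a) : ℕ) = w a + c) :
    Avoids2ClumpedOn z (Set.range e) := by
  have pos_lt {a b} : e a < e b ↔ a < b := by rw [Fin.lt_def, he, he]; omega
  have pos_adj {a b} : (e a : ℕ) = e b + 1 ↔ (a : ℕ) = b + 1 := by rw [he, he]; omega
  have val_lt {a b} : z (e a) < z (e b) ↔ w a < w b := by rw [Fin.lt_def, hz, hz]; omega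
  refine ⟨?_, ?_, ?_, ?_⟩
  all_goals
    rintro ⟨_, _, _, _, _, ⟨a1, rfl⟩, ⟨a2, rfl⟩, ⟨a3, rfl⟩, ⟨a4, rfl⟩, ⟨a5, rfl⟩, h⟩
    simp only [pos_lt, pos_adj, val_lt] at h
  exacts [hw.1 ⟨a1, a2, a3, a4, a5, h⟩, hw.2.1 ⟨a1, a2, a3, a4, a5, h⟩,
    hw.2.2.1 ⟨a1, a2, a3, a4, a5, h⟩, hw.2.2.2 ⟨a1, a2, a3, a4, a5, h⟩]

theorem avoids2Clumped_of_avoids2ClumpedOn_blocks {p q : ℕ} {z : Perm (Fin (p + q))}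
    (hz : ∀ i, (z i : ℕ) < p ↔ (i : ℕ) < p) (hl : Avoids2ClumpedOn z {i | (i : ℕ) < p})
    (hr : Avoids2ClumpedOn z {i | p ≤ (i : ℕ)}) : Avoids2Clumped z := by
  simp only [Avoids2Clumped, Avoids2ClumpedOn, Set.mem_ofPred_eq, Fin.lt_def] at hl hr ⊢
  refine ⟨?_, ?_, ?_, ?_⟩
  all_goals
    rintro ⟨i1, i2, i3, i4, i5, h⟩
    have := hz i1; have := hz i2; have := hz i3; have := hz i4; have := hz i5
    rcases lt_or_ge (i1 : ℕ) p with h1 | h1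
  · exact hl.1 ⟨i1, i2, i3, i4, i5, by omega, by omega, by omega, by omega, by omega, h⟩
  · exact hr.1 ⟨i1, i2, i3, i4, i5, by omega, by omega, by omega, by omega, by omega, h⟩
  · exact hl.2.1 ⟨i1, i2, i3, i4, i5, by omega, by omega, by omega, by omega, by omega, h⟩
  · exact hr.2.1 ⟨i1, i2, i3, i4, i5, by omega, by omega, by omega, by omega, by omega, h⟩
  · exact hl.2.2.1 ⟨i1, i2, i3, i4, i5, by omega, by omega, by omega, by omega, by omega, h⟩
  · exact hr.2.2.1 ⟨i1, i2, i3, i4, i5, by omega, by omega, by omega, by omega, by omega, h⟩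
  · exact hl.2.2.2 ⟨i1, i2, i3, i4, i5, by omega, by omega, by omega, by omega, by omega, h⟩
  · exact hr.2.2.2 ⟨i1, i2, i3, i4, i5, by omega, by omega, by omega, by omega, by omega, h⟩

section hconcat

variable {p q : ℕ} (x : Perm (Fin p)) (y : Perm (Fin q))

@[simp]
theorem hconcat_castAdd (i : Fin p) : hconcat x y (Fin.castAdd q i) = Fin.castAdd q (x i) := by
  simp [hconcat]

@[simp]
theorem hconcat_natAdd (j : Fin q) : hconcat x y (Fin.natAdd p j) = Fin.natAdd p (y j) := by
  simp [hconcat]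

theorem hconcat_val_lt_iff (i : Fin (p + q)) : (hconcat x y i : ℕ) < p ↔ (i : ℕ) < p := by
  induction i using Fin.addCases <;> simp

end hconcat

/-- If `x` and `y` are 2-clumped (avoid the four vincular patterns), then so is the
concatenation `xy'`. -/
theorem stmt_15 (p q : ℕ) (x : Equiv.Perm (Fin p)) (y : Equiv.Perm (Fin q))
    (hx : Avoids2Clumped x) (hy : Avoids2Clumped y) :
    Avoids2Clumped (hconcat x y) := by
  refine avoids2Clumped_of_avoids2ClumpedOn_blocks (hconcat_val_lt_iff x y) ?_ ?_
  · rw [← Fin.range_castLE (Nat.le_add_right p q)]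
    exact hx.avoids2ClumpedOn_range_of_shift (e := Fin.castAdd q) (c := 0)
      (fun _ => rfl) (fun _ => by simp)
  · rw [← Fin.range_natAdd]
    exact hy.avoids2ClumpedOn_range_of_shift (c := p)
      (fun _ => by simp [add_comm]) (fun _ => by simp [add_comm])
end

section
/- A permutation y ∈ S_n is 2-clumped (every descent of y has at most 2 associated clumps) if and only if y avoids the four vincular patterns 2-4-51-3, 4-2-51-3, 3-51-2-4, and 3-51-4-2. -/
/-- `S` is a set of consecutive values `{a, …, b}` strictly between `y i'` and `y i`
(the values of a descent of `y` at adjacent positions `i, i' = i+1`) all of whose elements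
occur before position `i`, or all after position `i'`. -/
def ConsecRun {n : ℕ} (y : Equiv.Perm (Fin n)) (i i' : Fin n) (S : Set (Fin n)) : Prop :=
  (∃ a b : Fin n, y i' < a ∧ a ≤ b ∧ b < y i ∧ S = {c : Fin n | a ≤ c ∧ c ≤ b}) ∧
  ((∀ c ∈ S, y.symm c < i) ∨ (∀ c ∈ S, i' < y.symm c))

/-- A clump of the descent of `y` at positions `i, i' = i+1`: a maximal set of consecutive
values strictly between `y i'` and `y i` occurring entirely before position `i` or
entirely after position `i'`. -/
def IsClump {n : ℕ} (y : Equiv.Perm (Fin n)) (i i' : Fin n) (S : Set (Fin n)) : Prop :=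
  ConsecRun y i i' S ∧ ∀ S' : Set (Fin n), ConsecRun y i i' S' → S ⊆ S' → S' = S

/-! Colour each value strictly between `y (i + 1)` and `y i` by whether it occurs left or right of
the descent. The clumps are then exactly the maximal monochromatic intervals of values, so there
are at most two of them unless some values `u < v < w` alternate in colour; and such an
alternating triple, read off in positions, is an occurrence of one of the four patterns, whose
`51` is the descent itself. -/

section Clumps

variable {n : ℕ} {y : Equiv.Perm (Fin n)} {i i' : Fin n}

def HasAlternatingTriple (y : Equiv.Perm (Fin n)) (i i' : Fin n) : Prop :=
  ∃ u v w : Fin n, y i' < u ∧ u < v ∧ v < w ∧ w < y i ∧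
    ¬(y.symm u < i ↔ y.symm v < i) ∧ (y.symm u < i ↔ y.symm w < i)

lemma HasAlternatingTriple.lt (h : HasAlternatingTriple y i i') : y i' < y i := by
  obtain ⟨u, v, w, hu, huv, hvw, hw, -⟩ := h
  exact hu.trans (huv.trans (hvw.trans hw))

lemma not_lt_of_succ_lt (hi' : (i' : ℕ) = i + 1) {p : Fin n} (h : i' < p) : ¬p < i := by
  rw [Fin.lt_def] at h ⊢
  omega

lemma succ_lt_of_not_lt_of_apply_mem_Ioo (hi' : (i' : ℕ) = i + 1) {p : Fin n} (hp : y i' < y p)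
    (hp' : y p < y i) (h : ¬p < i) : i' < p := by
  have hne : p ≠ i := fun he => hp'.ne (congrArg y he)
  have hne' : p ≠ i' := fun he => hp.ne' (congrArg y he)
  rw [Fin.lt_def] at h ⊢
  rw [Ne, Fin.ext_iff] at hne hne'
  omega

lemma consecRun_iff (hi' : (i' : ℕ) = i + 1) {S : Set (Fin n)} :
    ConsecRun y i i' S ↔ (∃ a b, y i' < a ∧ a ≤ b ∧ b < y i ∧ S = Set.Icc a b) ∧
      ∀ c ∈ S, ∀ d ∈ S, (y.symm c < i ↔ y.symm d < i) := by
  refine and_congr_right fun ⟨a, b, ha, hab, hb, hS⟩ => ⟨?_, fun h => ?_⟩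
  · rintro (h | h) c hc d hd
    · exact iff_of_true (h c hc) (h d hd)
    · exact iff_of_false (not_lt_of_succ_lt hi' (h c hc)) (not_lt_of_succ_lt hi' (h d hd))
  · have haS : a ∈ S := hS ▸ ⟨le_rfl, hab⟩
    by_cases hA : y.symm a < i
    · exact Or.inl fun c hc => (h a haS c hc).1 hA
    refine Or.inr fun c hc => succ_lt_of_not_lt_of_apply_mem_Ioo (y := y) hi' ?_ ?_
      fun hC => hA ((h a haS c hc).2 hC)
    · simpa using ha.trans_le (hS ▸ hc).1
    · simpa using (hS ▸ hc).2.trans_lt hb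

lemma ConsecRun.nonempty {S : Set (Fin n)} (hS : ConsecRun y i i' S) : S.Nonempty := by
  obtain ⟨⟨a, b, -, hab, -, rfl⟩, -⟩ := hS
  exact ⟨a, le_rfl, hab⟩

lemma ConsecRun.iff_of_mem (hi' : (i' : ℕ) = i + 1) {S : Set (Fin n)} (hS : ConsecRun y i i' S)
    {c d : Fin n} (hc : c ∈ S) (hd : d ∈ S) : y.symm c < i ↔ y.symm d < i :=
  ((consecRun_iff hi').1 hS).2 c hc d hd

lemma ConsecRun.mem_of_le_of_le {S : Set (Fin n)} (hS : ConsecRun y i i' S) {c d e : Fin n}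
    (hc : c ∈ S) (he : e ∈ S) (hcd : c ≤ d) (hde : d ≤ e) : d ∈ S := by
  obtain ⟨⟨a, b, -, -, -, rfl⟩, -⟩ := hS
  exact ⟨hc.1.trans hcd, hde.trans he.2⟩

lemma exists_isClump_mem (hi' : (i' : ℕ) = i + 1) {v : Fin n} (hv : y i' < v) (hv' : v < y i) :
    ∃ S, IsClump y i i' S ∧ v ∈ S := by
  have hrun : ConsecRun y i i' (Set.Icc v v) := by
    refine (consecRun_iff hi').2 ⟨⟨v, v, hv, le_rfl, hv', rfl⟩, ?_⟩
    rintro c ⟨hc, hc'⟩ d ⟨hd, hd'⟩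
    rw [le_antisymm hc' hc, le_antisymm hd' hd]
  obtain ⟨S, hvS, hS⟩ := Finite.exists_le_maximal hrun
  exact ⟨S, ⟨hS.prop, fun S' hS' hSS' => hS.eq_of_superset hS' hSS'⟩, hvS ⟨le_rfl, le_rfl⟩⟩

/-- The interval spanned by both clumps is monochromatic, hence a run containing each of them. -/
lemma IsClump.eq_of_mem_of_mem (hi' : (i' : ℕ) = i + 1) (hna : ¬HasAlternatingTriple y i i')
    {S S' : Set (Fin n)} (hS : IsClump y i i' S) (hS' : IsClump y i i' S') {p q : Fin n}
    (hp : p ∈ S) (hq : q ∈ S') (hpq : y.symm p < i ↔ y.symm q < i) : S = S' := by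
  obtain ⟨⟨a, b, ha, hab, hb, rfl⟩, hcol⟩ := (consecRun_iff hi').1 hS.1
  obtain ⟨⟨a', b', ha', hab', hb', rfl⟩, hcol'⟩ := (consecRun_iff hi').1 hS'.1
  have hunion : ∀ c ∈ Set.Icc a b ∪ Set.Icc a' b', (y.symm c < i ↔ y.symm p < i) := by
    rintro c (hc | hc)
    · exact hcol c hc p hp
    · exact (hcol' c hc q hq).trans hpq.symm
  have hl : min a a' ∈ Set.Icc a b ∪ Set.Icc a' b' := by
    rcases min_choice a a' with h | h <;> rw [h]
    exacts [Or.inl ⟨le_rfl, hab⟩, Or.inr ⟨le_rfl, hab'⟩]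
  have hr : max b b' ∈ Set.Icc a b ∪ Set.Icc a' b' := by
    rcases max_choice b b' with h | h <;> rw [h]
    exacts [Or.inl ⟨hab, le_rfl⟩, Or.inr ⟨hab', le_rfl⟩]
  have hspan : ∀ c ∈ Set.Icc (min a a') (max b b'), (y.symm c < i ↔ y.symm p < i) := by
    rintro c ⟨hlc, hcr⟩
    rcases hlc.eq_or_lt with rfl | hlc
    · exact hunion _ hl
    rcases hcr.eq_or_lt with rfl | hcr
    · exact hunion _ hr
    have hlr := (hunion _ hl).trans (hunion _ hr).symm
    have hlc' : y.symm (min a a') < i ↔ y.symm c < i := by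
      by_contra h
      exact hna ⟨_, c, _, lt_min ha ha', hlc, hcr, max_lt hb hb', h, hlr⟩
    exact hlc'.symm.trans (hunion _ hl)
  have hlr : min a a' ≤ max b b' := (min_le_left _ _).trans (hab.trans (le_max_left _ _))
  have hrun : ConsecRun y i i' (Set.Icc (min a a') (max b b')) :=
    (consecRun_iff hi').2 ⟨⟨_, _, lt_min ha ha', hlr, max_lt hb hb', rfl⟩,
      fun c hc d hd => (hspan c hc).trans (hspan d hd).symm⟩
  exact (hS.2 _ hrun (Set.Icc_subset_Icc (min_le_left _ _) (le_max_left _ _))).symm.trans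
    (hS'.2 _ hrun (Set.Icc_subset_Icc (min_le_right _ _) (le_max_right _ _)))

lemma ncard_isClump_le_two (hi' : (i' : ℕ) = i + 1) (hna : ¬HasAlternatingTriple y i i') :
    {S : Set (Fin n) | IsClump y i i' S}.ncard ≤ 2 := by
  by_contra! h
  obtain ⟨S₁, S₂, S₃, h₁, h₂, h₃, h₁₂, h₁₃, h₂₃⟩ := (Set.two_lt_ncard_iff (Set.toFinite _)).1 h
  obtain ⟨p₁, hp₁⟩ := h₁.1.nonempty
  obtain ⟨p₂, hp₂⟩ := h₂.1.nonempty
  obtain ⟨p₃, hp₃⟩ := h₃.1.nonempty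
  have : (y.symm p₁ < i ↔ y.symm p₂ < i) ∨ (y.symm p₁ < i ↔ y.symm p₃ < i) ∨
      (y.symm p₂ < i ↔ y.symm p₃ < i) := by tauto
  rcases this with h | h | h
  exacts [h₁₂ (h₁.eq_of_mem_of_mem hi' hna h₂ hp₁ hp₂ h),
    h₁₃ (h₁.eq_of_mem_of_mem hi' hna h₃ hp₁ hp₃ h), h₂₃ (h₂.eq_of_mem_of_mem hi' hna h₃ hp₂ hp₃ h)]

/-- The clumps of `u`, `v` and `w` in an alternating triple are pairwise distinct. -/
lemma two_lt_ncard_isClump (hi' : (i' : ℕ) = i + 1) (h : HasAlternatingTriple y i i') :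
    2 < {S : Set (Fin n) | IsClump y i i' S}.ncard := by
  obtain ⟨u, v, w, hu, huv, hvw, hw, huv', huw⟩ := h
  obtain ⟨S₁, h₁, hu₁⟩ := exists_isClump_mem hi' hu (huv.trans (hvw.trans hw))
  obtain ⟨S₂, h₂, hv₂⟩ := exists_isClump_mem hi' (hu.trans huv) (hvw.trans hw)
  obtain ⟨S₃, h₃, hw₃⟩ := exists_isClump_mem hi' (hu.trans (huv.trans hvw)) hw
  refine (Set.two_lt_ncard_iff (Set.toFinite _)).2 ⟨S₁, S₂, S₃, h₁, h₂, h₃, ?_, ?_, ?_⟩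
  · rintro rfl
    exact huv' (h₁.1.iff_of_mem hi' hu₁ hv₂)
  · rintro rfl
    exact huv' (h₁.1.iff_of_mem hi' hu₁ (h₁.1.mem_of_le_of_le hu₁ hw₃ huv.le hvw.le))
  · rintro rfl
    exact huv' (huw.trans (h₂.1.iff_of_mem hi' hw₃ hv₂))

lemma ncard_isClump_le_two_iff (hi' : (i' : ℕ) = i + 1) :
    {S : Set (Fin n) | IsClump y i i' S}.ncard ≤ 2 ↔ ¬HasAlternatingTriple y i i' :=
  ⟨fun h ht => (two_lt_ncard_isClump hi' ht).not_ge h, ncard_isClump_le_two hi'⟩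

lemma avoids2Clumped_iff :
    Avoids2Clumped y ↔ ∀ i i' : Fin n, (i' : ℕ) = i + 1 → ¬HasAlternatingTriple y i i' := by
  constructor
  · rintro ⟨h₁, h₂, h₃, h₄⟩ i i' hi' ⟨u, v, w, hu, huv, hvw, hw, huv', huw⟩
    obtain ⟨p, rfl⟩ := y.surjective u
    obtain ⟨q, rfl⟩ := y.surjective v
    obtain ⟨r, rfl⟩ := y.surjective w
    simp only [Equiv.symm_apply_apply] at huv' huw
    have hpr : p ≠ r := fun h => (huv.trans hvw).ne (congrArg y h)
    by_cases hp : p < i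
    · have hq : i' < q := succ_lt_of_not_lt_of_apply_mem_Ioo hi' (hu.trans huv) (hvw.trans hw)
        fun hq => huv' (iff_of_true hp hq)
      rcases hpr.lt_or_gt with h | h
      · exact h₁ ⟨p, r, i, i', q, h, huw.1 hp, hi', hq, hu, huv, hvw, hw⟩
      · exact h₂ ⟨r, p, i, i', q, h, hp, hi', hq, hu, huv, hvw, hw⟩
    · have hq : q < i := by tauto
      have hp' : i' < p := succ_lt_of_not_lt_of_apply_mem_Ioo hi' hu (huv.trans (hvw.trans hw)) hp
      have hr : i' < r := succ_lt_of_not_lt_of_apply_mem_Ioo hi' (hu.trans (huv.trans hvw)) hw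
        fun hr => hp (huw.2 hr)
      rcases hpr.lt_or_gt with h | h
      · exact h₃ ⟨q, i, i', p, r, hq, hi', hp', h, hu, huv, hvw, hw⟩
      · exact h₄ ⟨q, i, i', r, p, hq, hi', hr, h, hu, huv, hvw, hw⟩
  · intro h
    refine ⟨?_, ?_, ?_, ?_⟩ <;> rintro ⟨a, b, c, d, e, hab, hbc, hcd, hde, v₁, v₂, v₃, v₄⟩
    -- the descent of the pattern is `(c, d)` in the first two patterns, `(b, c)` in the others
    all_goals first
      | refine h _ _ hbc ⟨_, _, _, v₁, v₂, v₃, v₄, ?_⟩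
      | refine h _ _ hcd ⟨_, _, _, v₁, v₂, v₃, v₄, ?_⟩
    all_goals simp only [Equiv.symm_apply_apply, Fin.lt_def] at *; omega

end Clumps

/-- A permutation is 2-clumped (every descent has at most two clumps) if and only if it
avoids the four vincular patterns 2-4-51-3, 4-2-51-3, 3-51-2-4 and 3-51-4-2. -/
theorem stmt_16 (n : ℕ) (y : Equiv.Perm (Fin n)) :
    (∀ i i' : Fin n, (i' : ℕ) = (i : ℕ) + 1 → y i' < y i →
      {S : Set (Fin n) | IsClump y i i' S}.ncard ≤ 2) ↔ Avoids2Clumped y := by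
  rw [avoids2Clumped_iff]
  refine forall₂_congr fun i i' => forall_congr' fun hi' => ?_
  rw [ncard_isClump_le_two_iff hi']
  exact ⟨fun h ht => h ht.lt ht, fun h _ => h⟩
end
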